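/- Let n be an even positive integer. For λ, x : Fin n → ℝ, define the E-orbit function of type C_n by E_λ(x) = ∑ exp(2πi ∑_i ε i · λ(σ⁻¹ i) · x i), where the sum runs over all pairs (σ, ε) with σ a permutation of Fin n and ε : Fin n → ℝ satisfying ε i ∈ {1, −1} for all i and sign(σ) · ∏_i ε i = +1. Then E_λ(x) is real-valued: conj(E_λ(x)) = E_λ(x) for all λ and x. -/
import Mathlib


/-- The `E`-orbit function of type `Cₙ` in orthogonal coordinates:
the sum of `exp(2πi ∑ᵢ ε i · λ(σ⁻¹ i) · x i)` over all pairs `(σ, ε)` with `σ` a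
permutation, `ε i ∈ {1, −1}`, and `sign σ · ∏ᵢ ε i = 1`. -/
noncomputable def ECn (n : ℕ) (lam x : Fin n → ℝ) : ℂ :=
  ∑ σ : Equiv.Perm (Fin n),
    ∑ ε ∈ Fintype.piFinset (fun _ : Fin n => ({1, -1} : Finset ℝ)),
      if ((Equiv.Perm.sign σ : ℤ) : ℝ) * ∏ i, ε i = 1 then
        Complex.exp (2 * (Real.pi : ℂ) * Complex.I *
          ((∑ i, ε i * lam (σ⁻¹ i) * x i : ℝ) : ℂ))
      else 0

/-- For even `n`, the `E`-orbit functions of type `Cₙ` are real-valued. -/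
theorem ECn_real_of_even (n : ℕ) (hn : 0 < n) (heven : Even n) (lam x : Fin n → ℝ) :
    (starRingEnd ℂ) (ECn n lam x) = ECn n lam x := by
  unfold ECn
  rw [map_sum]
  refine Finset.sum_congr rfl fun σ _ => ?_
  rw [map_sum]
  have hmem : ∀ ε : Fin n → ℝ,
      ε ∈ Fintype.piFinset (fun _ : Fin n => ({1, -1} : Finset ℝ)) →
      (-ε) ∈ Fintype.piFinset (fun _ : Fin n => ({1, -1} : Finset ℝ)) := by
    intro ε hε
    simp only [Fintype.mem_piFinset, Finset.mem_insert, Finset.mem_singleton] at *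
    intro i
    rcases hε i with h | h <;> simp [Pi.neg_apply, h]
  refine Finset.sum_nbij' (fun ε => -ε) (fun ε => -ε) hmem hmem
    (fun ε _ => by simp) (fun ε _ => by simp) ?_
  intro ε hε
  have hprod : ∏ i, (-ε) i = ∏ i, ε i := by
    simp only [Pi.neg_apply]
    rw [show (fun i => -ε i) = (fun i => (-1 : ℝ) * ε i) by funext i; ring]
    rw [Finset.prod_mul_distrib, Finset.prod_const]
    simp [Even.neg_one_pow (by simpa using heven)]
  have hsum : (∑ i, (-ε) i * lam (σ⁻¹ i) * x i) = -(∑ i, ε i * lam (σ⁻¹ i) * x i) := by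
    rw [← Finset.sum_neg_distrib]
    refine Finset.sum_congr rfl fun i _ => by simp [Pi.neg_apply]
  rw [apply_ite (starRingEnd ℂ), map_zero, hprod]
  by_cases hc : ((Equiv.Perm.sign σ : ℤ) : ℝ) * ∏ i, ε i = 1
  · simp only [hc, if_true]
    rw [← Complex.exp_conj]
    congr 1
    rw [hsum]
    simp only [map_mul, Complex.conj_I, Complex.conj_ofReal, map_ofNat]
    push_cast
    ring
  · simp [hc]
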